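/- Fix positive real numbers k, λ and t^P, and for u > 0 set v = k·u, h = 1/u + 1/v, g = 1/λ + u/(v(u+v+λ)) − h, and q = 1/(uv) − (v+λ)/(v(u+v+λ)²). Define R(u) = ( h²e^{2u t^P} + (h(g − t^P) − 1/(uv))e^{u t^P} + g/λ + q )/( h e^{u t^P} + g ). Then R(u) tends to +∞ as u tends to 0 from the right. -/
import Mathlib

open Real Filter Set

noncomputable def rBarU (k lam tP u : ℝ) : ℝ :=
  let v := k * u
  let h := 1 / u + 1 / v
  let g := 1 / lam + u / (v * (u + v + lam)) - h
  let q := 1 / (u * v) - (v + lam) / (v * (u + v + lam) ^ 2)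
  (h ^ 2 * Real.exp (2 * u * tP) + (h * (g - tP) - 1 / (u * v)) * Real.exp (u * tP)
      + g / lam + q) / (h * Real.exp (u * tP) + g)

noncomputable def sF (k lam u : ℝ) : ℝ := 1 / (k * ((1 + k) * u + lam))

noncomputable def psiF (k lam u : ℝ) : ℝ := (k * u + lam) / (k * ((1 + k) * u + lam) ^ 2)

noncomputable def ph1 (tP u : ℝ) : ℝ := (Real.exp (u * tP) - 1) / u

noncomputable def ph2 (tP u : ℝ) : ℝ := (Real.exp (2 * u * tP) - 1) / u

noncomputable def cC (k : ℝ) : ℝ := (k + 1) / k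

noncomputable def NbF (k lam tP u : ℝ) : ℝ :=
  cC k * (u / lam + u * sF k lam u - cC k - tP * u) - 1 / k

noncomputable def NaF (k lam tP u : ℝ) : ℝ :=
  cC k * (1 / lam + sF k lam u - tP) + (u / lam + u * sF k lam u - cC k) / lam - psiF k lam u

noncomputable def NF (k lam tP u : ℝ) : ℝ :=
  cC k ^ 2 * ph2 tP u + NbF k lam tP u * ph1 tP u + NaF k lam tP u

noncomputable def DF (k lam tP u : ℝ) : ℝ :=
  cC k * u * ph1 tP u + u / lam + u * sF k lam u

lemma div_congr_aux (A B N D u : ℝ) (hu : u ≠ 0) (h1 : A * u ^ 2 = u * N)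
    (h2 : B * u ^ 2 = u * D) : A / B = N / D := by
  rw [← mul_div_mul_right A B (pow_ne_zero 2 hu), h1, h2, mul_div_mul_left N D hu]

set_option maxHeartbeats 3000000 in
lemma rBarU_eq (k lam tP u : ℝ) (hk : 0 < k) (hlam : 0 < lam) (hu : 0 < u) :
    rBarU k lam tP u = NF k lam tP u / DF k lam tP u := by
  have hu0 : u ≠ 0 := ne_of_gt hu
  have hk0 : k ≠ 0 := ne_of_gt hk
  have hl0 : lam ≠ 0 := ne_of_gt hlam
  have hs : u + k * u + lam ≠ 0 := by positivity
  have hs2 : (1 + k) * u + lam ≠ 0 := by positivity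
  simp only [rBarU, NF, DF, NaF, NbF, sF, psiF, ph1, ph2, cC]
  apply div_congr_aux _ _ _ _ u hu0
  · field_simp
    ring
  · field_simp
    ring

theorem statement11 (k lam tP : ℝ) (hk : 0 < k) (hlam : 0 < lam) (htP : 0 < tP) :
    Tendsto (rBarU k lam tP) (nhdsWithin 0 (Ioi 0)) atTop := by
  have hk0 : k ≠ 0 := ne_of_gt hk
  have hl0 : lam ≠ 0 := ne_of_gt hlam
  have hIoi : Ioi (0:ℝ) ⊆ {(0:ℝ)}ᶜ := fun x hx => (ne_of_gt hx : x ≠ 0)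
  have hmono : nhdsWithin (0:ℝ) (Ioi 0) ≤ nhdsWithin (0:ℝ) {(0:ℝ)}ᶜ :=
    nhdsWithin_mono 0 hIoi
  -- limits of ph1, ph2
  have hph1 : Tendsto (ph1 tP) (nhdsWithin 0 (Ioi 0)) (nhds tP) := by
    have hd : HasDerivAt (fun u : ℝ => Real.exp (u * tP)) tP 0 := by
      simpa using ((hasDerivAt_id (0:ℝ)).mul_const tP).exp
    have hsl := hasDerivAt_iff_tendsto_slope.mp hd
    refine (hsl.mono_left hmono).congr fun u => ?_
    simp [slope_def_field, ph1]
  have hph2 : Tendsto (ph2 tP) (nhdsWithin 0 (Ioi 0)) (nhds (2 * tP)) := by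
    have hd : HasDerivAt (fun u : ℝ => Real.exp (2 * u * tP)) (2 * tP) 0 := by
      simpa using (((hasDerivAt_id (0:ℝ)).const_mul 2).mul_const tP).exp
    have hsl := hasDerivAt_iff_tendsto_slope.mp hd
    refine (hsl.mono_left hmono).congr fun u => ?_
    simp [slope_def_field, ph2]
  -- continuity of rational pieces
  have hsFc : ContinuousAt (sF k lam) 0 := by
    unfold sF; fun_prop (disch := positivity)
  have hNac : ContinuousAt (NaF k lam tP) 0 := by
    unfold NaF sF psiF; fun_prop (disch := positivity)
  have hNbc : ContinuousAt (NbF k lam tP) 0 := by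
    unfold NbF sF; fun_prop (disch := positivity)
  have hut : Tendsto (fun u : ℝ => u) (nhdsWithin 0 (Ioi 0)) (nhds 0) :=
    tendsto_id.mono_left nhdsWithin_le_nhds
  -- limit of NF
  set L : ℝ := cC k ^ 2 * (2 * tP) + NbF k lam tP 0 * tP + NaF k lam tP 0 with hLdef
  have hLval : L = tP / k ^ 2 + 1 / (k ^ 2 * lam) := by
    simp only [hLdef, NbF, NaF, sF, psiF, cC]
    field_simp
    ring
  have hLpos : 0 < L := by rw [hLval]; positivity
  have hNt : Tendsto (NF k lam tP) (nhdsWithin 0 (Ioi 0)) (nhds L) := by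
    have h1 : Tendsto (NbF k lam tP) (nhdsWithin 0 (Ioi 0)) (nhds (NbF k lam tP 0)) :=
      hNbc.continuousWithinAt
    have h2 : Tendsto (NaF k lam tP) (nhdsWithin 0 (Ioi 0)) (nhds (NaF k lam tP 0)) :=
      hNac.continuousWithinAt
    exact ((tendsto_const_nhds.mul hph2).add (h1.mul hph1)).add h2
  -- limit of DF
  have hDt0 : Tendsto (DF k lam tP) (nhdsWithin 0 (Ioi 0)) (nhds 0) := by
    have hc : Tendsto (fun _ : ℝ => cC k) (nhdsWithin (0:ℝ) (Ioi 0)) (nhds (cC k)) :=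
      tendsto_const_nhds
    have hs : Tendsto (sF k lam) (nhdsWithin 0 (Ioi 0)) (nhds (sF k lam 0)) :=
      hsFc.continuousWithinAt
    have h := ((hc.mul hut).mul hph1).add ((hut.div_const lam).add (hut.mul hs))
    simp only [mul_zero, zero_mul, zero_div, add_zero, zero_add] at h
    refine h.congr fun u => ?_
    simp only [DF]; ring
  have hDpos : ∀ u ∈ Ioi (0:ℝ), 0 < DF k lam tP u := by
    intro u hu
    have hu' : (0:ℝ) < u := hu
    have hexp : 0 < Real.exp (u * tP) - 1 := by
      have h := Real.add_one_lt_exp (x := u * tP) (by positivity)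
      have : 0 < u * tP := by positivity
      linarith
    have hph1pos : 0 < ph1 tP u := div_pos hexp hu'
    have t1 : 0 < cC k * u * ph1 tP u := by
      have : 0 < cC k := by unfold cC; positivity
      positivity
    have t2 : 0 < u / lam := by positivity
    have t3 : 0 < u * sF k lam u := by
      have : 0 < sF k lam u := by unfold sF; positivity
      positivity
    unfold DF; linarith
  have hDt : Tendsto (DF k lam tP) (nhdsWithin 0 (Ioi 0)) (nhdsWithin 0 (Ioi 0)) := by
    rw [tendsto_nhdsWithin_iff]
    exact ⟨hDt0, by filter_upwards [eventually_mem_nhdsWithin] with u hu using hDpos u hu⟩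
  have hDinv : Tendsto (fun u => (DF k lam tP u)⁻¹) (nhdsWithin 0 (Ioi 0)) atTop :=
    hDt.inv_tendsto_nhdsGT_zero
  have hmain : Tendsto (fun u => NF k lam tP u * (DF k lam tP u)⁻¹)
      (nhdsWithin 0 (Ioi 0)) atTop := hNt.pos_mul_atTop hLpos hDinv
  refine hmain.congr' ?_
  filter_upwards [eventually_mem_nhdsWithin] with u hu
  rw [rBarU_eq k lam tP u hk hlam hu, div_eq_mul_inv]
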